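/- arXiv:2306.07819 — 3 statements merged into one kernel-verified Lean document; each statement's English description precedes it below -/
import Mathlib

section
/- KR-U confidence envelope in the pre-ordered setting (Theorem 3.2): In the pre-ordered setting with threshold s ∈ (0,1], for all δ ∈ (0,1) and λ ∈ [s,1), with probability at least 1 − δ, simultaneously for all k ∈ {1,...,m}: FDP(R_k) ≤ 1 ∧ min_{a ∈ ℕ, a ≥ 1} { [ log(1/δ_a) / ( a log(1 + (1 − δ_a^{B/a})/B) ) ] · ( a + (s/(1−λ)) Σ_{i=1}^k 1{p_{π(i)} > λ} ) / ( 1 ∨ Σ_{i=1}^k 1{p_{π(i)} ≤ s} ) }, where δ_a = δ/(κ a²) and B = s/(1−λ). -/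
/-!
For `a ≥ 1` put `δ_a = δ / (κ a²)` (`splitLevel`), `ν_a = δ_a ^ (B / a)` and
`x_a = 1 + (1 - ν_a) / B`. The step function equal to `x_a` on `[0, s]`, to `1` on `(s, λ]` and
to `ν_a` on `(λ, 1]` (`krEValue`) integrates to `x_a s + (λ - s) + ν_a (1 - λ) = 1` because
`B = s / (1 - λ)`, so its values at the null p-values are independent mean-one e-values. Their
running products along the order `π` form a nonnegative martingale, and Ville's inequality
(Doob's maximal inequality) bounds by `δ_a` the probability that one of them ever reaches
`1 / δ_a`. A union bound over `a`, with `∑ δ_a = δ` (Basel problem), leaves an event of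
probability at least `1 - δ` on which this never happens. There the product over the first `k`
hypotheses is `x_a ^ V * ν_a ^ N < 1 / δ_a`, where `V` counts the false rejections and `N` the
nulls with `p > λ`; taking logarithms gives `V ≤ KRconstPre δ B a * (a + B N)`, and dividing by
the number of rejections gives the envelope.
-/

open MeasureTheory ProbabilityTheory Finset

/-- The false discovery proportion of a rejection set `R` with respect to the set `H0`
of true nulls: `|R ∩ H0| / (|R| ∨ 1)`. -/
noncomputable def FDP {m : ℕ} (H0 R : Finset (Fin m)) : ℝ :=
  ((R ∩ H0).card : ℝ) / max R.card 1

/-- The KR-type constant `log(1/δ_a) / (a log(1 + (1 − δ_a^{B/a})/B))`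
with `δ_a = δ/(κ a²)`, `κ = π²/6`. -/
noncomputable def KRconstPre (δ B : ℝ) (a : ℕ) : ℝ :=
  Real.log (1 / (δ / ((Real.pi ^ 2 / 6) * (a : ℝ) ^ 2)))
    / ((a : ℝ) * Real.log (1 + (1 - (δ / ((Real.pi ^ 2 / 6) * (a : ℝ) ^ 2)) ^ (B / (a : ℝ))) / B))

lemma Fin.prod_filter_univ_eq_prod_filter_range {M : Type*} [CommMonoid M] {m : ℕ}
    (p : ℕ → Prop) [DecidablePred p] (f : ℕ → M) :
    ∏ i ∈ univ.filter (fun i : Fin m => p i), f i = ∏ n ∈ (range m).filter p, f n := by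
  rw [prod_filter, prod_filter, Fin.prod_univ_eq_prod_range (fun n => if p n then f n else 1)]

namespace ProbabilityTheory

variable {Ω : Type*} {mΩ : MeasurableSpace Ω} {μ : Measure Ω}

lemma iIndepFun.extend_const {β : Type*} [MeasurableSpace β] {m : ℕ} {r : Fin m → Ω → β}
    (hr : iIndepFun r μ) (c : β) :
    iIndepFun (fun n => if h : n < m then r ⟨n, h⟩ else fun _ => c) μ := by
  classical
  have := hr.isProbabilityMeasure
  set Y : ℕ → Ω → β := fun n => if h : n < m then r ⟨n, h⟩ else fun _ => c
  have hY : ∀ i : Fin m, Y i = r i := fun i => dif_pos i.isLt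
  rw [iIndepFun_iff_measure_inter_preimage_eq_mul] at hr ⊢
  intro S A hA
  by_cases hc : ∃ n ∈ S, m ≤ n ∧ c ∉ A n
  · obtain ⟨n, hnS, hnm, hcn⟩ := hc
    have hempty : Y n ⁻¹' A n = ∅ := by ext ω; simp [Y, not_lt.2 hnm, hcn]
    rw [prod_eq_zero hnS (by rw [hempty, measure_empty])]
    exact measure_mono_null (Set.biInter_subset_of_mem hnS) (by rw [hempty, measure_empty])
  push Not at hc
  have hpre : ∀ n ∈ S, ¬ n < m → Y n ⁻¹' A n = Set.univ := fun n hn hnm => by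
    ext ω; simp [Y, hnm, hc n hn (not_lt.1 hnm)]
  have key := hr (univ.filter fun i : Fin m => (i : ℕ) ∈ S) (sets := fun i => A i)
    (fun i hi => hA i (by simpa using hi))
  convert key using 1
  · congr 1
    ext ω
    simp only [Set.mem_iInter, Set.mem_preimage, mem_filter, mem_univ, true_and]
    refine ⟨fun h i hi => by simpa [hY] using h i hi, fun h n hn => ?_⟩
    by_cases hnm : n < m
    · simpa [Y, hnm] using h ⟨n, hnm⟩ hn
    · rw [← Set.mem_preimage, hpre n hn hnm]
      trivial
  · simp_rw [← hY]
    rw [Fin.prod_filter_univ_eq_prod_filter_range (· ∈ S) fun n => μ (Y n ⁻¹' A n),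
      show (range m).filter (· ∈ S) = S.filter (· < m) by ext; simp [and_comm],
      prod_filter_of_ne fun n hn hne => by_contra fun hnm => hne (by simp [hpre n hn hnm])]

section PartialProducts

variable {Y : ℕ → Ω → ℝ}

lemma iIndepFun.integrable_prod_range (hind : iIndepFun Y μ) (hmeas : ∀ i, Measurable (Y i))
    (hint : ∀ i, Integrable (Y i) μ) (n : ℕ) : Integrable (∏ i ∈ range n, Y i) μ := by
  have := hind.isProbabilityMeasure
  induction n with
  | zero => exact integrable_const (1 : ℝ)
  | succ n ih =>
    rw [prod_range_succ]
    exact (hind.indepFun_prod_range_succ hmeas n).integrable_mul ih (hint n)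

lemma iIndepFun.integral_prod_range (hind : iIndepFun Y μ) (hmeas : ∀ i, Measurable (Y i))
    (hmean : ∀ i, ∫ ω, Y i ω ∂μ = 1) (n : ℕ) : ∫ ω, (∏ i ∈ range n, Y i) ω ∂μ = 1 := by
  have := hind.isProbabilityMeasure
  induction n with
  | zero => simp
  | succ n ih =>
    rw [prod_range_succ, (hind.indepFun_prod_range_succ hmeas n).integral_mul_eq_mul_integral
      (Finset.aemeasurable_prod _ fun i _ => (hmeas i).aemeasurable).aestronglyMeasurable
      (hmeas n).aestronglyMeasurable, ih, hmean, one_mul]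

lemma iIndepFun.martingale_prod_range (hind : iIndepFun Y μ) (hmeas : ∀ i, Measurable (Y i))
    (hmean : ∀ i, ∫ ω, Y i ω ∂μ = 1) :
    Martingale (fun n => ∏ i ∈ range (n + 1), Y i)
      (Filtration.natural Y fun i => (hmeas i).stronglyMeasurable) μ := by
  have := hind.isProbabilityMeasure
  -- an integral equal to `1` forces integrability
  have hint : ∀ i, Integrable (Y i) μ := fun i => .of_integral_ne_zero (by simp [hmean i])
  have hsm : ∀ i, StronglyMeasurable (Y i) := fun i => (hmeas i).stronglyMeasurable
  have hadapted : StronglyAdapted (Filtration.natural Y hsm) fun n => ∏ i ∈ range (n + 1), Y i :=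
    fun n => Finset.stronglyMeasurable_prod _ fun i hi =>
      ((Filtration.stronglyAdapted_natural hsm) i).mono
        ((Filtration.natural Y hsm).mono (Nat.lt_succ_iff.1 (mem_range.1 hi)))
  refine martingale_nat hadapted (fun n => hind.integrable_prod_range hmeas hint _) fun n => ?_
  have hpull := condExp_mul_of_stronglyMeasurable_left (m := Filtration.natural Y hsm n)
    (μ := μ) (hadapted n) (by simpa [prod_range_succ] using
      hind.integrable_prod_range hmeas hint (n + 2)) (hint (n + 1))
  have hfresh := hind.condExp_natural_ae_eq_of_lt hsm (Nat.lt_succ_self n)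
  rw [show (∏ i ∈ range (n + 1 + 1), Y i) = (∏ i ∈ range (n + 1), Y i) * Y (n + 1) from
    prod_range_succ _ _]
  filter_upwards [hpull, hfresh] with ω h1 h2
  simp [h1, h2, hmean]

theorem iIndepFun.measure_exists_le_prod_range_le [IsProbabilityMeasure μ]
    (hind : iIndepFun Y μ) (hmeas : ∀ i, Measurable (Y i)) (hnonneg : ∀ i ω, 0 ≤ Y i ω)
    (hmean : ∀ i, ∫ ω, Y i ω ∂μ = 1) {t : ℝ} (ht : 0 < t)
    (n : ℕ) : μ {ω | ∃ k ≤ n, t ≤ ∏ i ∈ range (k + 1), Y i ω} ≤ ENNReal.ofReal t⁻¹ := by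
  have hmart := hind.martingale_prod_range hmeas hmean
  have hprod_nonneg : 0 ≤ fun n => ∏ i ∈ range (n + 1), Y i := fun n ω => by
    simpa [prod_apply] using prod_nonneg fun i _ => hnonneg i ω
  have hdoob := maximal_ineq hmart.submartingale hprod_nonneg (ε := t.toNNReal) n
  have hset : {ω | ((t.toNNReal : ℝ)) ≤ (range (n + 1)).sup' nonempty_range_add_one
      fun k => (∏ i ∈ range (k + 1), Y i) ω} = {ω | ∃ k ≤ n, t ≤ ∏ i ∈ range (k + 1), Y i ω} := by
    ext ω
    simp [le_sup'_iff, prod_apply, ht.le]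
  rw [hset] at hdoob
  have hintegral : ∫ ω, (∏ i ∈ range (n + 1), Y i) ω ∂μ = 1 :=
    hind.integral_prod_range hmeas hmean (n + 1)
  rw [ENNReal.ofReal_inv_of_pos ht, ENNReal.le_inv_iff_mul_le, mul_comm]
  calc ENNReal.ofReal t * μ _ ≤ ENNReal.ofReal (∫ ω in _, (∏ i ∈ range (n + 1), Y i) ω ∂μ) :=
        hdoob
    _ ≤ ENNReal.ofReal (∫ ω, (∏ i ∈ range (n + 1), Y i) ω ∂μ) :=
        ENNReal.ofReal_le_ofReal (setIntegral_le_integral (hmart.integrable n)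
          (Filter.Eventually.of_forall (hprod_nonneg n)))
    _ = 1 := by rw [hintegral, ENNReal.ofReal_one]

end PartialProducts

theorem iIndepFun.measure_exists_le_prod_le {m : ℕ} {r : Fin m → Ω → ℝ} (hind : iIndepFun r μ)
    (hmeas : ∀ i, Measurable (r i)) (hnonneg : ∀ i ω, 0 ≤ r i ω)
    (hmean : ∀ i, ∫ ω, r i ω ∂μ = 1) {t : ℝ} (ht : 0 < t) :
    μ {ω | ∃ k ∈ Icc 1 m, t ≤ ∏ i ∈ univ.filter (fun i : Fin m => (i : ℕ) < k), r i ω} ≤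
      ENNReal.ofReal t⁻¹ := by
  have := hind.isProbabilityMeasure
  set Y : ℕ → Ω → ℝ := fun n => if h : n < m then r ⟨n, h⟩ else fun _ => 1
  have hY : ∀ i : Fin m, Y i = r i := fun i => dif_pos i.isLt
  have hYmeas : ∀ n, Measurable (Y n) := fun n => by
    by_cases h : n < m <;> simp [Y, h, hmeas, measurable_const]
  have hYnonneg : ∀ n ω, 0 ≤ Y n ω := fun n ω => by
    by_cases h : n < m <;> simp [Y, h, hnonneg]
  have hYmean : ∀ n, ∫ ω, Y n ω ∂μ = 1 := fun n => by
    by_cases h : n < m <;> simp [Y, h, hmean]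
  have hYind : iIndepFun Y μ := hind.extend_const 1
  refine le_trans (measure_mono ?_) (hYind.measure_exists_le_prod_range_le
    hYmeas hYnonneg hYmean ht m)
  rintro ω ⟨k, hk, hle⟩
  refine ⟨k - 1, by have := mem_Icc.1 hk; omega, ?_⟩
  rw [Nat.sub_add_cancel (mem_Icc.1 hk).1]
  convert hle using 1
  simp_rw [← hY]
  rw [Fin.prod_filter_univ_eq_prod_filter_range (· < k) fun n => Y n ω,
    show (range m).filter (· < k) = (range k).filter (· < m) by ext; simp [and_comm],
    prod_filter_of_ne fun n _ hne => by_contra fun hnm => hne (by simp [Y, hnm])]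

end ProbabilityTheory

lemma one_sub_le_toReal_measure {Ω : Type*} {mΩ : MeasurableSpace Ω} {μ : Measure Ω}
    [IsProbabilityMeasure μ] {s t : Set Ω} {δ : ℝ} (hδ : 0 ≤ δ) (hst : ∀ ω ∉ t, ω ∈ s)
    (ht : μ t ≤ ENNReal.ofReal δ) : 1 - δ ≤ (μ s).toReal := by
  have h : 1 ≤ μ s + ENNReal.ofReal δ := calc
    1 = μ Set.univ := measure_univ.symm
    _ ≤ μ s + μ sᶜ := measure_univ_le_add_compl s
    _ ≤ μ s + ENNReal.ofReal δ := add_le_add_right ((measure_mono fun ω (hω : ω ∈ sᶜ) =>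
          not_not.1 fun h => hω (hst ω h)).trans ht) _
  have := ENNReal.toReal_mono (by finiteness) h
  rw [ENNReal.toReal_add (measure_ne_top _ _) ENNReal.ofReal_ne_top, ENNReal.toReal_ofReal hδ,
    ENNReal.toReal_one] at this
  linarith

noncomputable def stepEValue (s lam x ν : ℝ) (u : ℝ) : ℝ :=
  if u ≤ s then x else if lam < u then ν else 1

section StepEValue

variable {s lam x ν : ℝ}

lemma measurable_stepEValue : Measurable (stepEValue s lam x ν) :=
  Measurable.ite measurableSet_Iic measurable_const
    (Measurable.ite measurableSet_Ioi measurable_const measurable_const)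

lemma integral_stepEValue (hs : 0 ≤ s) (hsl : s ≤ lam) (hl : lam ≤ 1) :
    ∫ u in Set.Icc (0 : ℝ) 1, stepEValue s lam x ν u = x * s + (lam - s) + ν * (1 - lam) := by
  have hsplit : Set.Icc (0 : ℝ) 1 = Set.Icc 0 s ∪ Set.Ioc s lam ∪ Set.Ioc lam 1 := by
    rw [Set.Icc_union_Ioc_eq_Icc hs hsl, Set.Icc_union_Ioc_eq_Icc (hs.trans hsl) hl]
  have hd12 : Disjoint (Set.Icc 0 s) (Set.Ioc s lam) :=
    Set.disjoint_left.2 fun u h1 h2 => not_le.2 h2.1 h1.2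
  have hd3 : Disjoint (Set.Icc 0 s ∪ Set.Ioc s lam) (Set.Ioc lam 1) := by
    rw [Set.Icc_union_Ioc_eq_Icc hs hsl]
    exact Set.disjoint_left.2 fun u h1 h2 => not_le.2 h2.1 h1.2
  have hint :
      IntegrableOn (stepEValue s lam x ν) (Set.Icc 0 s ∪ Set.Ioc s lam ∪ Set.Ioc lam 1) := by
    refine Measure.integrableOn_of_bounded (M := |x| + |ν| + 1)
      (by rw [← hsplit]; exact measure_Icc_lt_top.ne)
      measurable_stepEValue.aestronglyMeasurable (Filter.Eventually.of_forall fun u => ?_)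
    unfold stepEValue
    split_ifs <;> simp only [Real.norm_eq_abs, abs_one] <;> linarith [abs_nonneg x, abs_nonneg ν]
  have hconst : ∀ t : Set ℝ, MeasurableSet t → ∀ c, Set.EqOn (stepEValue s lam x ν) (fun _ => c) t →
      ∫ u in t, stepEValue s lam x ν u = volume.real t * c := fun t ht c heq => by
    rw [setIntegral_congr_fun ht heq, setIntegral_const, smul_eq_mul]
  rw [hsplit, setIntegral_union hd3 measurableSet_Ioc (hint.mono_set Set.subset_union_left)
      (hint.mono_set Set.subset_union_right),
    setIntegral_union hd12 measurableSet_Ioc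
      (hint.mono_set (Set.subset_union_left.trans Set.subset_union_left))
      (hint.mono_set (Set.subset_union_right.trans Set.subset_union_left)),
    hconst _ measurableSet_Icc x fun u hu => if_pos hu.2,
    hconst _ measurableSet_Ioc 1 fun u hu => by simp [stepEValue, not_le.2 hu.1, hu.2],
    hconst _ measurableSet_Ioc ν fun u hu => by
      simp [stepEValue, not_le.2 (hsl.trans_lt hu.1), hu.1],
    Real.volume_real_Icc_of_le hs, Real.volume_real_Ioc_of_le hsl, Real.volume_real_Ioc_of_le hl]
  ring

lemma prod_ite_stepEValue {ι : Type*} (hsl : s ≤ lam) (S : Finset ι) (P : ι → Prop)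
    [DecidablePred P] (w : ι → ℝ) :
    ∏ i ∈ S, (if P i then stepEValue s lam x ν (w i) else 1) =
      x ^ (S.filter fun i => P i ∧ w i ≤ s).card *
        ν ^ (S.filter fun i => P i ∧ lam < w i).card := by
  rw [← prod_filter]
  simp only [stepEValue]
  rw [prod_ite, prod_const, prod_ite, prod_const, prod_const_one, mul_one, filter_filter,
    filter_filter, filter_filter]
  congr 3
  exact filter_congr fun i _ =>
    and_congr_right fun _ => and_iff_right_of_imp fun h => not_le.2 (hsl.trans_lt h)

end StepEValue

lemma FDP_le_one {m : ℕ} (H0 R : Finset (Fin m)) : FDP H0 R ≤ 1 := by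
  unfold FDP
  refine div_le_one_of_le₀ ?_ (by positivity)
  exact_mod_cast (card_le_card inter_subset_left).trans (le_max_left _ _)

lemma FDP_image_of_injective {m : ℕ} (H0 S : Finset (Fin m)) {f : Fin m → Fin m}
    (hf : f.Injective) :
    FDP H0 (S.image f) = ((S.filter fun i => f i ∈ H0).card : ℝ) / max S.card 1 := by
  rw [FDP, ← filter_mem_eq_inter, filter_image, card_image_of_injective _ hf,
    card_image_of_injective _ hf]

noncomputable def splitLevel (δ : ℝ) (a : ℕ) : ℝ := δ / ((Real.pi ^ 2 / 6) * (a : ℝ) ^ 2)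

noncomputable def krConst (d B a : ℝ) : ℝ :=
  Real.log (1 / d) / (a * Real.log (1 + (1 - d ^ (B / a)) / B))

noncomputable def krEValue (s lam d B a : ℝ) : ℝ → ℝ :=
  stepEValue s lam (1 + (1 - d ^ (B / a)) / B) (d ^ (B / a))

lemma KRconstPre_eq_krConst (δ B : ℝ) (a : ℕ) :
    KRconstPre δ B a = krConst (splitLevel δ a) B a := rfl

lemma splitLevel_pos {δ : ℝ} (hδ : 0 < δ) {a : ℕ} (ha : 1 ≤ a) : 0 < splitLevel δ a := by
  have : (1 : ℝ) ≤ a := by exact_mod_cast ha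
  unfold splitLevel
  positivity

lemma splitLevel_lt_one {δ : ℝ} (hδ : δ < 1) {a : ℕ} (ha : 1 ≤ a) : splitLevel δ a < 1 := by
  have ha' : (1 : ℝ) ≤ a := by exact_mod_cast ha
  have hκ : 1 < Real.pi ^ 2 / 6 := by nlinarith [Real.pi_gt_three]
  rw [splitLevel, div_lt_one (by positivity)]
  nlinarith

lemma tsum_splitLevel {δ : ℝ} (hδ : 0 ≤ δ) :
    ∑' a : {n : ℕ // 1 ≤ n}, ENNReal.ofReal (splitLevel δ a) = ENNReal.ofReal δ := by
  have hsum : HasSum (fun n : ℕ => splitLevel δ n) δ := by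
    have h := hasSum_zeta_two.mul_left (δ / (Real.pi ^ 2 / 6))
    rw [div_mul_cancel₀ _ (by positivity)] at h
    refine h.congr_fun fun n => ?_
    rw [splitLevel, div_mul_div_comm, mul_one]
  have hsupp : Function.support (fun n : ℕ => splitLevel δ n) ⊆ {n | 1 ≤ n} := fun n hn => by
    by_contra h
    simp [Nat.lt_one_iff.1 (not_le.1 h), splitLevel] at hn
  have hsub : HasSum (fun a : {n : ℕ // 1 ≤ n} => splitLevel δ a) δ :=
    (hasSum_subtype_iff_of_support_subset hsupp).2 hsum
  rw [← ENNReal.ofReal_tsum_of_nonneg (fun a => by unfold splitLevel; positivity) hsub.summable,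
    hsub.tsum_eq]

section KRBound

variable {d B a : ℝ}

lemma krConst_nonneg (hd0 : 0 < d) (hd1 : d ≤ 1) (hB : 0 < B) (ha : 0 ≤ a) :
    0 ≤ krConst d B a := by
  have hν1 : d ^ (B / a) ≤ 1 := Real.rpow_le_one hd0.le hd1 (by positivity)
  refine div_nonneg (Real.log_nonneg ((one_le_div hd0).2 hd1)) (mul_nonneg ha (Real.log_nonneg ?_))
  have : 0 ≤ (1 - d ^ (B / a)) / B := div_nonneg (by linarith) hB.le
  linarith

lemma measurable_krEValue {s lam : ℝ} : Measurable (krEValue s lam d B a) :=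
  measurable_stepEValue

lemma krEValue_nonneg {s lam : ℝ} (hd0 : 0 ≤ d) (hd1 : d ≤ 1) (hB : 0 < B) (ha : 0 ≤ a)
    (u : ℝ) : 0 ≤ krEValue s lam d B a u := by
  have hν0 : 0 ≤ d ^ (B / a) := Real.rpow_nonneg hd0 _
  have hν1 : d ^ (B / a) ≤ 1 := Real.rpow_le_one hd0 hd1 (by positivity)
  unfold krEValue stepEValue
  split_ifs
  · have : 0 ≤ (1 - d ^ (B / a)) / B := div_nonneg (by linarith) hB.le
    linarith
  · exact hν0
  · exact zero_le_one

lemma integral_krEValue {s lam : ℝ} (hs : 0 < s) (hsl : s ≤ lam) (hl : lam < 1) :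
    ∫ u in Set.Icc (0 : ℝ) 1, krEValue s lam d (s / (1 - lam)) a u = 1 := by
  have : 1 - lam ≠ 0 := by linarith
  rw [krEValue, integral_stepEValue hs.le hsl hl.le]
  field_simp
  ring

lemma natCast_le_krConst_mul (hd0 : 0 < d) (hd1 : d < 1) (hB : 0 < B) (ha : 0 < a) {V N : ℕ}
    (h : (1 + (1 - d ^ (B / a)) / B) ^ V * (d ^ (B / a)) ^ N < 1 / d) :
    (V : ℝ) ≤ krConst d B a * (a + B * N) := by
  set ν := d ^ (B / a)
  set x := 1 + (1 - ν) / B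
  set L := Real.log (1 / d)
  have hν0 : 0 < ν := Real.rpow_pos_of_pos hd0 _
  have hν1 : ν < 1 := Real.rpow_lt_one hd0.le hd1 (div_pos hB ha)
  have hlogx : 0 < Real.log x := Real.log_pos (lt_add_of_pos_right 1 (div_pos (by linarith) hB))
  have hlogν : Real.log ν = -(B / a) * L := by
    simp only [ν, L]
    rw [Real.log_rpow hd0, one_div, Real.log_inv, neg_mul, mul_neg, neg_neg]
  have hlog : V * Real.log x + N * Real.log ν < L := by
    have := Real.log_lt_log (by positivity) h
    rwa [Real.log_mul (by positivity) (by positivity), Real.log_pow, Real.log_pow] at this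
  rw [hlogν] at hlog
  have key : (V : ℝ) * Real.log x * a ≤ L * (a + B * N) := by
    have := mul_lt_mul_of_pos_right hlog ha
    field_simp at this
    linarith
  rw [krConst, div_mul_eq_mul_div, le_div_iff₀ (by positivity)]
  linarith

end KRBound

lemma FDP_le_krConst_of_prod_krEValue_lt {m : ℕ} (H0 : Finset (Fin m))
    (perm : Equiv.Perm (Fin m)) (u : Fin m → ℝ) {s lam d B a : ℝ} (hsl : s ≤ lam)
    (hd0 : 0 < d) (hd1 : d < 1) (hB : 0 < B) (ha : 0 < a) (k : ℕ)
    (h : ∏ i ∈ univ.filter (fun i : Fin m => (i : ℕ) < k),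
        (if perm i ∈ H0 then krEValue s lam d B a (u (perm i)) else 1) < 1 / d) :
    FDP H0 ((univ.filter fun i : Fin m => (i : ℕ) < k ∧ u (perm i) ≤ s).image perm) ≤
      krConst d B a * (a + B * (univ.filter fun i : Fin m => (i : ℕ) < k ∧ lam < u (perm i)).card)
        / ((max 1 (univ.filter fun i : Fin m => (i : ℕ) < k ∧ u (perm i) ≤ s).card : ℕ) : ℝ) := by
  rw [krEValue, prod_ite_stepEValue hsl] at h
  have hV := natCast_le_krConst_mul hd0 hd1 hB ha h
  rw [filter_filter, filter_filter] at hV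
  have hnulls : (univ.filter fun i : Fin m => ((i : ℕ) < k ∧ u (perm i) ≤ s) ∧ perm i ∈ H0) =
      univ.filter fun i : Fin m => (i : ℕ) < k ∧ perm i ∈ H0 ∧ u (perm i) ≤ s :=
    filter_congr fun i _ => by tauto
  have hN : (univ.filter fun i : Fin m => (i : ℕ) < k ∧ perm i ∈ H0 ∧ lam < u (perm i)).card ≤
      (univ.filter fun i : Fin m => (i : ℕ) < k ∧ lam < u (perm i)).card :=
    card_le_card (monotone_filter_right _ fun i _ h => ⟨h.1, h.2.2⟩)
  rw [FDP_image_of_injective _ _ perm.injective, filter_filter, hnulls, max_comm]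
  refine div_le_div_of_nonneg_right (hV.trans (mul_le_mul_of_nonneg_left ?_
    (krConst_nonneg hd0 hd1.le hB ha.le))) (Nat.cast_nonneg _)
  gcongr

theorem measure_exists_le_prod_nulls_le {Ω : Type*} [MeasureSpace Ω]
    [IsProbabilityMeasure (ℙ : Measure Ω)] {m : ℕ} {p : Fin m → Ω → ℝ} {H0 : Finset (Fin m)}
    (perm : Equiv.Perm (Fin m)) (hmeas : ∀ i, Measurable (p i)) (hindep : iIndepFun p ℙ)
    (hnull : ∀ i ∈ H0, Measure.map (p i) ℙ = volume.restrict (Set.Icc (0:ℝ) 1))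
    {g : ℝ → ℝ} (hg : Measurable g) (hg0 : ∀ u, 0 ≤ g u) (hg1 : ∫ u in Set.Icc (0 : ℝ) 1, g u = 1)
    {t : ℝ} (ht : 0 < t) :
    ℙ {ω | ∃ k ∈ Icc 1 m, t ≤ ∏ i ∈ univ.filter (fun i : Fin m => (i : ℕ) < k),
      (if perm i ∈ H0 then g (p (perm i) ω) else 1)} ≤ ENNReal.ofReal t⁻¹ := by
  classical
  set e : Fin m → ℝ → ℝ := fun j u => if j ∈ H0 then g u else 1
  have he : ∀ j, Measurable (e j) := fun j => by
    by_cases hj : j ∈ H0 <;> simp [e, hj, hg]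
  have hmean : ∀ j, ∫ ω, e j (p j ω) = 1 := fun j => by
    by_cases hj : j ∈ H0
    · simp only [e, hj, if_true]
      rw [← integral_map (hmeas j).aemeasurable hg.aestronglyMeasurable, hnull j hj, hg1]
    · simp [e, hj]
  exact ((hindep.comp e he).precomp perm.injective).measure_exists_le_prod_le
    (fun i => (he _).comp (hmeas _)) (fun i ω => by by_cases h : perm i ∈ H0 <;> simp [e, h, hg0])
    (fun i => hmean _) ht

theorem KRU_envelope_preordered_general
    {Ω : Type*} [MeasureSpace Ω] [IsProbabilityMeasure (ℙ : Measure Ω)]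
    (m : ℕ) (p : Fin m → Ω → ℝ) (H0 : Finset (Fin m))
    (perm : Equiv.Perm (Fin m)) (s lam : ℝ) (hs : s ∈ Set.Ioc (0:ℝ) 1)
    (hlam : lam ∈ Set.Ico s 1)
    (hmeas : ∀ i, Measurable (p i))
    (hindep : iIndepFun p ℙ)
    (hnull : ∀ i ∈ H0, Measure.map (p i) ℙ = volume.restrict (Set.Icc (0:ℝ) 1))
    (δ : ℝ) (hδ : δ ∈ Set.Ioo (0:ℝ) 1) :
    1 - δ ≤ (ℙ {ω | ∀ k ∈ Finset.Icc 1 m,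
        FDP H0 ((Finset.univ.filter
            (fun i : Fin m => (i : ℕ) < k ∧ p (perm i) ω ≤ s)).image perm) ≤
          min 1 (⨅ a : {n : ℕ // 1 ≤ n},
            KRconstPre δ (s / (1 - lam)) (a : ℕ)
              * (((a : ℕ) : ℝ) + (s / (1 - lam)) * ((Finset.univ.filter
                    (fun i : Fin m => (i : ℕ) < k ∧ lam < p (perm i) ω)).card : ℝ))
              / ((max 1 ((Finset.univ.filter
                    (fun i : Fin m => (i : ℕ) < k ∧ p (perm i) ω ≤ s)).card) : ℕ) : ℝ))}).toReal := by
  obtain ⟨hs0, -⟩ := hs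
  obtain ⟨hsl, hlam1⟩ := hlam
  obtain ⟨hδ0, hδ1⟩ := hδ
  have hB : 0 < s / (1 - lam) := div_pos hs0 (by linarith)
  set bad : {n : ℕ // 1 ≤ n} → Set Ω := fun a =>
    {ω | ∃ k ∈ Icc 1 m, 1 / splitLevel δ a ≤ ∏ i ∈ univ.filter (fun i : Fin m => (i : ℕ) < k),
      (if perm i ∈ H0 then krEValue s lam (splitLevel δ a) (s / (1 - lam)) a (p (perm i) ω)
        else 1)}
  have hbad : ∀ a, ℙ (bad a) ≤ ENNReal.ofReal (splitLevel δ a) := fun ⟨a, ha⟩ => by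
    have hlevel := splitLevel_pos hδ0 ha
    simpa only [inv_div, div_one] using measure_exists_le_prod_nulls_le perm hmeas hindep hnull
      measurable_krEValue (krEValue_nonneg hlevel.le (splitLevel_lt_one hδ1 ha).le hB a.cast_nonneg)
      (integral_krEValue hs0 hsl hlam1) (one_div_pos.2 hlevel)
  refine one_sub_le_toReal_measure hδ0.le (t := ⋃ a, bad a) (fun ω hω k hk => ?_) ?_
  · simp only [Set.mem_iUnion, not_exists] at hω
    have : Nonempty {n : ℕ // 1 ≤ n} := ⟨⟨1, le_rfl⟩⟩
    refine le_min (FDP_le_one _ _) (le_ciInf fun ⟨a, ha⟩ => ?_)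
    rw [KRconstPre_eq_krConst]
    exact FDP_le_krConst_of_prod_krEValue_lt H0 perm (fun j => p j ω) hsl
      (splitLevel_pos hδ0 ha) (splitLevel_lt_one hδ1 ha) hB (by positivity) k
      (lt_of_not_ge fun h => hω ⟨a, ha⟩ ⟨k, hk, h⟩)
  · calc ℙ (⋃ a, bad a) ≤ ∑' a, ℙ (bad a) := measure_iUnion_le _
      _ ≤ ∑' a : {n : ℕ // 1 ≤ n}, ENNReal.ofReal (splitLevel δ a) := ENNReal.tsum_le_tsum hbad
      _ = ENNReal.ofReal δ := tsum_splitLevel hδ0.le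

/-- KR-U confidence envelope in the pre-ordered setting (Theorem 3.2). -/
theorem KRU_envelope_preordered
    {Ω : Type*} [MeasureSpace Ω] [IsProbabilityMeasure (ℙ : Measure Ω)]
    (m : ℕ) (p : Fin m → Ω → ℝ) (H0 : Finset (Fin m))
    (perm : Equiv.Perm (Fin m)) (s lam : ℝ) (hs : s ∈ Set.Ioc (0:ℝ) 1)
    (hlam : lam ∈ Set.Ico s 1)
    (hval : ∀ i ω, p i ω ∈ Set.Icc (0:ℝ) 1)
    (hmeas : ∀ i, Measurable (p i))
    (hindep : iIndepFun p ℙ)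
    (hnull : ∀ i ∈ H0, Measure.map (p i) ℙ = volume.restrict (Set.Icc (0:ℝ) 1))
    (δ : ℝ) (hδ : δ ∈ Set.Ioo (0:ℝ) 1) :
    1 - δ ≤ (ℙ {ω | ∀ k ∈ Finset.Icc 1 m,
        FDP H0 ((Finset.univ.filter
            (fun i : Fin m => (i : ℕ) < k ∧ p (perm i) ω ≤ s)).image perm) ≤
          min 1 (⨅ a : {n : ℕ // 1 ≤ n},
            KRconstPre δ (s / (1 - lam)) (a : ℕ)
              * (((a : ℕ) : ℝ) + (s / (1 - lam)) * ((Finset.univ.filter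
                    (fun i : Fin m => (i : ℕ) < k ∧ lam < p (perm i) ω)).card : ℝ))
              / ((max 1 ((Finset.univ.filter
                    (fun i : Fin m => (i : ℕ) < k ∧ p (perm i) ω ≤ s)).card) : ℕ) : ℝ))}).toReal :=
  KRU_envelope_preordered_general m p H0 perm s lam hs hlam hmeas hindep hnull δ hδ
end

section
/- Uniform Hoeffding bound for Bernoulli sums (Lemma A.2): Let X_i ~ Bernoulli(p_i), 1 ≤ i ≤ m, be independent Bernoulli random variables with parameters p_i ∈ [0,1]. Then for every real a ≥ 1 and every integer m ≥ a: P( sup_{a ≤ k ≤ m} | k^{-1} Σ_{i=1}^k (X_i − p_i) | ≥ a^{−1/4} ) ≤ (2 + a^{1/2}) e^{−2 a^{1/2}}, where the supremum is over integers k with a ≤ k ≤ m. -/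
/-!
Each centred summand `X i - prob i` lies in an interval of length one, so by Hoeffding's lemma it
is sub-Gaussian with variance proxy `1/4`, and the partial sum `S k` of the first `k` of them is
sub-Gaussian with variance proxy `k/4`. Hence `P(|S k| ≥ k b) ≤ 2 r ^ k` with `r = exp (-2 b²)`.
A union bound over `⌈a⌉ ≤ k ≤ m` gives at most `2 r ^ ⌈a⌉ / (1 - r)`. With `b = a^(-1/4)` we have
`b² = 1/√a`, so `r ^ ⌈a⌉ ≤ exp (-2√a)`, and `1 - e^(-x) ≥ x / (1 + x)` bounds `2 / (1 - r)` by
`2 + √a`.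
-/

open MeasureTheory ProbabilityTheory Real Set
open scoped NNReal

namespace ProbabilityTheory.HasSubgaussianMGF

variable {Ω : Type*} {mΩ : MeasurableSpace Ω} {μ : Measure Ω} {X : Ω → ℝ} {c : ℝ≥0}

lemma measureReal_abs_ge_le (h : HasSubgaussianMGF X c μ) {ε : ℝ} (hε : 0 ≤ ε) :
    μ.real {ω | ε ≤ |X ω|} ≤ 2 * exp (-ε ^ 2 / (2 * c)) := by
  have hsplit : {ω | ε ≤ |X ω|} = {ω | ε ≤ X ω} ∪ {ω | ε ≤ (-X) ω} := by
    ext ω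
    simp [le_abs]
  calc μ.real {ω | ε ≤ |X ω|}
      ≤ μ.real {ω | ε ≤ X ω} + μ.real {ω | ε ≤ (-X) ω} :=
        hsplit ▸ measureReal_union_le _ _
    _ ≤ exp (-ε ^ 2 / (2 * c)) + exp (-ε ^ 2 / (2 * c)) :=
        add_le_add (h.measure_ge_le hε) (h.neg.measure_ge_le hε)
    _ = 2 * exp (-ε ^ 2 / (2 * c)) := by ring

lemma measureReal_abs_sum_ge_le {ι : Type*} {Y : ι → Ω → ℝ} (hindep : iIndepFun Y μ)
    {s : Finset ι} (hY : ∀ i ∈ s, HasSubgaussianMGF (Y i) c μ) {ε : ℝ} (hε : 0 ≤ ε) :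
    μ.real {ω | ε ≤ |∑ i ∈ s, Y i ω|} ≤ 2 * exp (-ε ^ 2 / (2 * s.card * c)) := by
  simpa [mul_assoc] using (sum_of_iIndepFun hindep hY).measureReal_abs_ge_le hε

end ProbabilityTheory.HasSubgaussianMGF

section Bernoulli

variable {Ω : Type*} {mΩ : MeasurableSpace Ω} {μ : Measure Ω}

lemma integral_eq_measureReal_of_forall_eq_zero_or_eq_one {X : Ω → ℝ} (hXm : Measurable X)
    (hX : ∀ ω, X ω = 0 ∨ X ω = 1) :
    μ[X] = μ.real {ω | X ω = 1} := by
  have hind : X = {ω | X ω = 1}.indicator 1 := by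
    ext ω
    rcases hX ω with h | h <;> simp [h]
  conv_lhs => rw [hind]
  exact integral_indicator_one (hXm (measurableSet_singleton 1))

lemma hasSubgaussianMGF_sub_of_forall_eq_zero_or_eq_one [IsProbabilityMeasure μ] {X : Ω → ℝ}
    (hXm : Measurable X) (hX : ∀ ω, X ω = 0 ∨ X ω = 1) :
    HasSubgaussianMGF (fun ω ↦ X ω - μ.real {ω | X ω = 1}) (1 / 4) μ := by
  have h := hasSubgaussianMGF_of_mem_Icc (μ := μ) (a := 0) (b := 1) hXm.aemeasurable
    (ae_of_all _ fun ω ↦ by rcases hX ω with h | h <;> simp [h])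
  rw [integral_eq_measureReal_of_forall_eq_zero_or_eq_one hXm hX] at h
  convert h using 1
  norm_num

lemma measureReal_abs_sum_bernoulli_ge_le [IsProbabilityMeasure μ] {m k : ℕ} (hkm : k ≤ m)
    {X : ℕ → Ω → ℝ} (hXm : ∀ i, Measurable (X i)) (hX : ∀ i ω, X i ω = 0 ∨ X i ω = 1)
    (hindep : iIndepFun (fun i : Fin m ↦ X (i + 1)) μ) {ε : ℝ} (hε : 0 ≤ ε) :
    μ.real {ω | ε ≤ |∑ i ∈ Finset.Icc 1 k, (X i ω - μ.real {ω | X i ω = 1})|}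
      ≤ 2 * exp (-2 * ε ^ 2 / k) := by
  let Y : ℕ → Ω → ℝ := fun i ω ↦ X i ω - μ.real {ω | X i ω = 1}
  have hindepY : iIndepFun (fun j : Fin k ↦ Y (j + 1)) μ :=
    (hindep.precomp (Fin.castLE_injective hkm)).comp
      (fun j x ↦ x - μ.real {ω | X (j + 1) ω = 1}) (fun _ ↦ measurable_id.sub_const _)
  have hsum (ω : Ω) : ∑ i ∈ Finset.Icc 1 k, Y i ω = ∑ j : Fin k, Y (j + 1) ω := by
    rw [Fin.sum_univ_eq_sum_range (fun i ↦ Y (i + 1) ω),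
      ← Finset.Ico_add_one_right_eq_Icc, Finset.sum_Ico_eq_sum_range]
    simp [add_comm]
  calc μ.real {ω | ε ≤ |∑ i ∈ Finset.Icc 1 k, Y i ω|}
      = μ.real {ω | ε ≤ |∑ j : Fin k, Y (j + 1) ω|} := by simp_rw [hsum]
    _ ≤ 2 * exp (-ε ^ 2 / (2 * (Finset.univ : Finset (Fin k)).card * (1 / 4 : ℝ≥0))) :=
      HasSubgaussianMGF.measureReal_abs_sum_ge_le hindepY
        (fun _ _ ↦ hasSubgaussianMGF_sub_of_forall_eq_zero_or_eq_one (hXm _) (hX _)) hε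
    _ = 2 * exp (-2 * ε ^ 2 / k) := by
      congr 2
      simp only [Finset.card_univ, Fintype.card_fin]
      push_cast
      ring

lemma measureReal_exists_abs_sum_bernoulli_ge_le [IsProbabilityMeasure μ] {m : ℕ}
    {X : ℕ → Ω → ℝ} (hXm : ∀ i, Measurable (X i)) (hX : ∀ i ω, X i ω = 0 ∨ X i ω = 1)
    (hindep : iIndepFun (fun i : Fin m ↦ X (i + 1)) μ) (K : ℕ) {b : ℝ} (hb : 0 < b) :
    μ.real {ω | ∃ k ∈ Finset.Icc K m,
        k * b ≤ |∑ i ∈ Finset.Icc 1 k, (X i ω - μ.real {ω | X i ω = 1})|}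
      ≤ 2 * exp (-2 * b ^ 2) ^ K / (1 - exp (-2 * b ^ 2)) := by
  set r := exp (-2 * b ^ 2)
  have hr : r < 1 := exp_lt_one_iff.2 (by nlinarith)
  have htail (k : ℕ) : exp (-2 * (k * b) ^ 2 / k) = r ^ k := by
    rcases eq_or_ne k 0 with rfl | hk
    · simp
    · rw [← exp_nat_mul]
      field_simp
  calc _ = μ.real (⋃ k ∈ Finset.Icc K m,
        {ω | k * b ≤ |∑ i ∈ Finset.Icc 1 k, (X i ω - μ.real {ω | X i ω = 1})|}) := by
        congr 1
        ext ω
        simp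
    _ ≤ ∑ k ∈ Finset.Icc K m, 2 * r ^ k := by
        refine (measureReal_biUnion_finset_le _ _).trans (Finset.sum_le_sum fun k hk ↦ ?_)
        rw [← htail]
        exact measureReal_abs_sum_bernoulli_ge_le (Finset.mem_Icc.1 hk).2 hXm hX hindep
          (by positivity)
    _ ≤ 2 * r ^ K / (1 - r) := by
        rw [← Finset.mul_sum, mul_div_assoc, ← Finset.Ico_add_one_right_eq_Icc]
        gcongr
        exact geom_sum_Ico_le_of_lt_one (exp_pos _).le hr

end Bernoulli

lemma inv_one_sub_exp_neg_le {x : ℝ} (hx : 0 < x) : (1 - exp (-x))⁻¹ ≤ 1 + x⁻¹ := by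
  have hexp : exp (-x) ≤ (1 + x)⁻¹ := by
    rw [exp_neg]
    exact inv_anti₀ (by positivity) (by linarith [add_one_le_exp x])
  have hlow : x / (1 + x) ≤ 1 - exp (-x) := by
    have : x / (1 + x) = 1 - (1 + x)⁻¹ := by field_simp; ring
    linarith
  calc (1 - exp (-x))⁻¹ ≤ (x / (1 + x))⁻¹ := inv_anti₀ (by positivity) hlow
    _ = 1 + x⁻¹ := by rw [inv_div, add_div, div_self hx.ne', one_div, add_comm]

lemma two_mul_exp_pow_div_le {s : ℝ} (hs : 0 < s) {K : ℕ} (hK : s ^ 2 ≤ K) :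
    2 * exp (-2 * s⁻¹) ^ K / (1 - exp (-2 * s⁻¹)) ≤ (2 + s) * exp (-2 * s) := by
  have hpow : exp (-2 * s⁻¹) ^ K ≤ exp (-2 * s) := by
    rw [← exp_nat_mul, exp_le_exp]
    have : s ≤ K * s⁻¹ := by rw [le_mul_inv_iff₀ hs]; nlinarith
    linarith
  have hinv : 2 * (1 - exp (-2 * s⁻¹))⁻¹ ≤ 2 + s := by
    have := inv_one_sub_exp_neg_le (x := 2 * s⁻¹) (by positivity)
    rw [mul_inv, inv_inv, ← neg_mul] at this
    linarith
  calc 2 * exp (-2 * s⁻¹) ^ K / (1 - exp (-2 * s⁻¹))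
      = 2 * (1 - exp (-2 * s⁻¹))⁻¹ * exp (-2 * s⁻¹) ^ K := by ring_nf
    _ ≤ (2 + s) * exp (-2 * s) := by gcongr

lemma rpow_neg_one_div_four_sq {a : ℝ} (ha : 0 ≤ a) : (a ^ (-(1 : ℝ) / 4)) ^ 2 = (√a)⁻¹ := by
  rw [← rpow_natCast, ← rpow_mul ha, sqrt_eq_rpow, ← rpow_neg ha]
  norm_num

theorem uniform_hoeffding_bernoulli_general
    {Ω : Type*} [MeasureSpace Ω] [IsProbabilityMeasure (ℙ : Measure Ω)]
    (m : ℕ) (X : ℕ → Ω → ℝ) (prob : ℕ → ℝ)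
    (hXval : ∀ i ω, X i ω = 0 ∨ X i ω = 1)
    (hXmeas : ∀ i, Measurable (X i))
    (hindep : iIndepFun
      (fun i : Fin m => fun ω => X ((i : ℕ) + 1) ω) ℙ)
    (hlaw : ∀ i ∈ Finset.Icc 1 m, (ℙ {ω | X i ω = 1}).toReal = prob i)
    (a : ℝ) (ha : 1 ≤ a) :
    (ℙ {ω | ∃ k : ℕ, a ≤ k ∧ k ≤ m ∧
        a ^ (-(1:ℝ)/4) ≤ |(k : ℝ)⁻¹ * ∑ i ∈ Finset.Icc 1 k, (X i ω - prob i)|}).toReal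
      ≤ (2 + Real.sqrt a) * Real.exp (-2 * Real.sqrt a) := by
  have ha0 : 0 < a := by linarith
  set b := a ^ (-(1 : ℝ) / 4)
  have hevent : {ω | ∃ k : ℕ, a ≤ k ∧ k ≤ m ∧
        b ≤ |(k : ℝ)⁻¹ * ∑ i ∈ Finset.Icc 1 k, (X i ω - prob i)|}
      ⊆ {ω | ∃ k ∈ Finset.Icc ⌈a⌉₊ m,
        k * b ≤ |∑ i ∈ Finset.Icc 1 k, (X i ω - (ℙ : Measure Ω).real {ω | X i ω = 1})|} := by
    rintro ω ⟨k, hak, hkm, hdev⟩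
    have hk : (0 : ℝ) < k := ha0.trans_le hak
    refine ⟨k, Finset.mem_Icc.2 ⟨Nat.ceil_le.2 hak, hkm⟩, ?_⟩
    have hprob : ∀ i ∈ Finset.Icc 1 k, prob i = (ℙ : Measure Ω).real {ω | X i ω = 1} :=
      fun i hi ↦ (hlaw i (Finset.Icc_subset_Icc_right hkm hi)).symm
    rw [← Finset.sum_congr rfl fun i hi ↦ congrArg (X i ω - ·) (hprob i hi)]
    rwa [abs_mul, abs_inv, abs_of_pos hk, ← div_eq_inv_mul, le_div_iff₀ hk, mul_comm] at hdev
  calc (ℙ : Measure Ω).real _ ≤ (ℙ : Measure Ω).real _ := measureReal_mono hevent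
    _ ≤ 2 * exp (-2 * b ^ 2) ^ ⌈a⌉₊ / (1 - exp (-2 * b ^ 2)) :=
      measureReal_exists_abs_sum_bernoulli_ge_le hXmeas hXval hindep _ (by positivity)
    _ ≤ (2 + √a) * exp (-2 * √a) := by
      rw [rpow_neg_one_div_four_sq ha0.le]
      exact two_mul_exp_pow_div_le (sqrt_pos.2 ha0) ((sq_sqrt ha0.le).trans_le (Nat.le_ceil a))

/-- Uniform Hoeffding bound for Bernoulli sums (Lemma A.2). -/
theorem uniform_hoeffding_bernoulli
    {Ω : Type*} [MeasureSpace Ω] [IsProbabilityMeasure (ℙ : Measure Ω)]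
    (m : ℕ) (X : ℕ → Ω → ℝ) (prob : ℕ → ℝ)
    (hprob : ∀ i, prob i ∈ Set.Icc (0:ℝ) 1)
    (hXval : ∀ i ω, X i ω = 0 ∨ X i ω = 1)
    (hXmeas : ∀ i, Measurable (X i))
    (hindep : iIndepFun
      (fun i : Fin m => fun ω => X ((i : ℕ) + 1) ω) ℙ)
    (hlaw : ∀ i ∈ Finset.Icc 1 m, (ℙ {ω | X i ω = 1}).toReal = prob i)
    (a : ℝ) (ha : 1 ≤ a) (hma : a ≤ m) :
    (ℙ {ω | ∃ k : ℕ, a ≤ k ∧ k ≤ m ∧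
        a ^ (-(1:ℝ)/4) ≤ |(k : ℝ)⁻¹ * ∑ i ∈ Finset.Icc 1 k, (X i ω - prob i)|}).toReal
      ≤ (2 + Real.sqrt a) * Real.exp (-2 * Real.sqrt a) :=
  uniform_hoeffding_bernoulli_general m X prob hXval hXmeas hindep hlaw a ha
end

section
/- Properties of the function h (Lemma D.1): The function h(λ) = λ(log λ − 1) + 1 is increasing and strictly convex from (1,∞) onto (0,∞), and its inverse h^{-1} is increasing and strictly concave from (0,∞) onto (1,∞). Moreover: (a) for all λ > 1, 2(√λ − 1)² ≤ h(λ) ≤ (λ − 1)²/2; (b) for all y > 0, 1 + √(2y) ≤ h^{-1}(y) ≤ (1 + √(y/2))²; (c) for every c > 0, the map x ↦ x · h^{-1}(c/x) is increasing on (1, +∞). -/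
/-!
`h` is the Kullback–Leibler generator `klFun`, so it is continuous, strictly convex on `[0, ∞)`
with derivative `log`; on `[1, ∞)` it increases from `h 1 = 0`. The properties of `h⁻¹` are
then formal: a strictly increasing right inverse of a strictly increasing strictly convex function
is strictly increasing and strictly concave. The bounds (a) come from comparing derivatives on
`[1, ∞)` (`log λ ≤ λ - 1` and `2 (1 - 1/√λ) ≤ log λ`), and (b) is (a) read at `λ = h⁻¹ y`.
For (c), write `λ = h⁻¹ (c / x)`: then `x λ = c / (h λ / λ)`, and `h λ / λ = log λ - 1 + 1/λ`
is increasing on `[1, ∞)` while `λ` decreases in `x`.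
-/

open Real Set

/-- The function `h(λ) = λ(log λ - 1) + 1`. -/
noncomputable def hfun (x : ℝ) : ℝ := x * (Real.log x - 1) + 1

open InformationTheory

section RightInverse

variable {𝕜 α β : Type*} {s : Set α} {t : Set β} {f : α → β} {g : β → α}

theorem StrictMonoOn.strictMonoOn_of_rightInvOn [LinearOrder α] [Preorder β]
    (hf : StrictMonoOn f s) (hg : MapsTo g t s) (hfg : RightInvOn g f t) :
    StrictMonoOn g t := fun x hx y hy hxy => by
  rwa [← hf.lt_iff_lt (hg hx) (hg hy), hfg.eq hx, hfg.eq hy]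

theorem StrictConvexOn.strictConcaveOn_of_rightInvOn [Semiring 𝕜] [PartialOrder 𝕜]
    [AddCommMonoid α] [LinearOrder α] [SMul 𝕜 α] [AddCommMonoid β] [PartialOrder β] [SMul 𝕜 β]
    (hf : StrictConvexOn 𝕜 s f) (hf_mono : StrictMonoOn f s) (ht : Convex 𝕜 t)
    (hg : MapsTo g t s) (hfg : RightInvOn g f t) :
    StrictConcaveOn 𝕜 t g := by
  refine ⟨ht, fun x hx y hy hxy a b ha hb hab => ?_⟩
  have hgxy : g x ≠ g y := fun h => hxy (by rw [← hfg.eq hx, ← hfg.eq hy, h])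
  have hmem : a • g x + b • g y ∈ s := hf.1 (hg hx) (hg hy) ha.le hb.le hab
  rw [← hf_mono.lt_iff_lt hmem (hg (ht hx hy ha.le hb.le hab)), hfg.eq (ht hx hy ha.le hb.le hab)]
  simpa only [hfg.eq hx, hfg.eq hy] using hf.2 (hg hx) (hg hy) hgxy ha hb hab

end RightInverse

theorem le_of_hasDerivAt_le {f g f' g' : ℝ → ℝ} {a x : ℝ} (hf : ContinuousOn f (Ici a))
    (hg : ContinuousOn g (Ici a)) (hf' : ∀ y, a < y → HasDerivAt f (f' y) y)
    (hg' : ∀ y, a < y → HasDerivAt g (g' y) y) (hle : ∀ y, a < y → f' y ≤ g' y)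
    (ha : f a = g a) (hx : a ≤ x) : f x ≤ g x := by
  have hmono : MonotoneOn (g - f) (Ici a) := by
    refine monotoneOn_of_hasDerivWithinAt_nonneg (f' := g' - f') (convex_Ici a) (hg.sub hf)
      (fun y hy => ?_) (fun y hy => ?_) <;> rw [interior_Ici] at hy
    · exact ((hg' y hy).sub (hf' y hy)).hasDerivWithinAt
    · exact sub_nonneg.2 (hle y hy)
  have := hmono self_mem_Ici hx hx
  simp only [Pi.sub_apply, ha, sub_self] at this
  linarith

theorem hfun_eq_klFun : hfun = klFun := by
  ext x
  rw [hfun, klFun_apply]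
  ring

theorem continuous_hfun : Continuous hfun := hfun_eq_klFun ▸ continuous_klFun

theorem hasDerivAt_hfun {x : ℝ} (hx : x ≠ 0) : HasDerivAt hfun (log x) x :=
  hfun_eq_klFun ▸ hasDerivAt_klFun hx

theorem strictConvexOn_hfun : StrictConvexOn ℝ (Ici 0) hfun := hfun_eq_klFun ▸ strictConvexOn_klFun

theorem hfun_one : hfun 1 = 0 := hfun_eq_klFun ▸ klFun_one

theorem strictMonoOn_hfun : StrictMonoOn hfun (Ici 1) := by
  refine strictMonoOn_of_hasDerivWithinAt_pos (f' := log) (convex_Ici 1)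
    continuous_hfun.continuousOn (fun x hx => ?_) (fun x hx => ?_) <;> rw [interior_Ici] at hx
  · exact (hasDerivAt_hfun (zero_lt_one.trans hx).ne').hasDerivWithinAt
  · exact log_pos hx

theorem mapsTo_hfun : MapsTo hfun (Ioi 1) (Ioi 0) := fun x hx => by
  simpa only [hfun_one, mem_Ioi] using strictMonoOn_hfun self_mem_Ici (mem_Ici.2 (le_of_lt hx)) hx

theorem hfun_le_sub_one_sq_div_two {l : ℝ} (hl : 1 ≤ l) : hfun l ≤ (l - 1) ^ 2 / 2 := by
  refine le_of_hasDerivAt_le (g := fun x => (x - 1) ^ 2 / 2) (g' := fun x => x - 1)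
    continuous_hfun.continuousOn (by fun_prop)
    (fun y hy => hasDerivAt_hfun (zero_lt_one.trans hy).ne') (fun y _ => ?_)
    (fun y hy => log_le_sub_one_of_pos (zero_lt_one.trans hy)) (by simp [hfun_one]) hl
  simpa using (((hasDerivAt_id y).sub_const 1).pow 2).div_const 2

theorem two_mul_sqrt_sub_one_sq_le_hfun {l : ℝ} (hl : 1 ≤ l) : 2 * (√l - 1) ^ 2 ≤ hfun l := by
  refine le_of_hasDerivAt_le (f := fun x => 2 * (√x - 1) ^ 2) (f' := fun x => 2 * (1 - (√x)⁻¹))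
    (by fun_prop) continuous_hfun.continuousOn (fun y hy => ?_)
    (fun y hy => hasDerivAt_hfun (zero_lt_one.trans hy).ne') (fun y hy => ?_)
    (by simp [hfun_one]) hl
  · have hs : √y ≠ 0 := (sqrt_pos.2 (zero_lt_one.trans hy)).ne'
    refine ((((hasDerivAt_sqrt (zero_lt_one.trans hy).ne').sub_const 1).pow 2).const_mul
      2).congr_deriv ?_
    field_simp
    ring
  · have hs := sqrt_pos.2 (zero_lt_one.trans hy)
    have hlog := one_sub_inv_le_log_of_pos hs
    rw [log_sqrt (zero_lt_one.trans hy).le] at hlog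
    linarith

theorem one_add_sqrt_two_mul_hfun_le {l : ℝ} (hl : 1 ≤ l) : 1 + √(2 * hfun l) ≤ l := by
  have hup := hfun_le_sub_one_sq_div_two hl
  have hsqrt : √(2 * hfun l) ≤ l - 1 := (sqrt_le_left (by linarith)).2 (by linarith)
  linarith

theorem le_one_add_sqrt_hfun_div_two_sq {l : ℝ} (hl : 1 ≤ l) : l ≤ (1 + √(hfun l / 2)) ^ 2 := by
  have h1 : 1 ≤ √l := one_le_sqrt.2 hl
  have hlow := two_mul_sqrt_sub_one_sq_le_hfun hl
  have h2 : √l - 1 ≤ √(hfun l / 2) :=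
    (le_sqrt (by linarith) (by nlinarith [sq_nonneg (√l - 1)])).2 (by linarith)
  calc l = √l ^ 2 := (sq_sqrt (by linarith)).symm
    _ ≤ (1 + √(hfun l / 2)) ^ 2 := pow_le_pow_left₀ (by linarith) (by linarith) 2

theorem hfun_div_self {x : ℝ} (hx : x ≠ 0) : hfun x / x = log x - 1 + x⁻¹ := by
  rw [hfun]
  field_simp

theorem strictMonoOn_hfun_div_self : StrictMonoOn (fun x => hfun x / x) (Ici 1) := by
  intro a ha b hb hab
  have ha0 : 0 < a := zero_lt_one.trans_le ha
  have hb0 : 0 < b := ha0.trans hab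
  simp only [hfun_div_self ha0.ne', hfun_div_self hb0.ne']
  have hlog : log a - log b < a / b - 1 := by
    rw [← log_div ha0.ne' hb0.ne']
    exact log_lt_sub_one_of_pos (div_pos ha0 hb0) (div_lt_one hb0 |>.2 hab).ne
  have hinv : a⁻¹ - b⁻¹ ≤ 1 - a / b := by
    have hab' : a⁻¹ - b⁻¹ = (1 - a / b) * a⁻¹ := by field_simp
    rw [hab']
    exact mul_le_of_le_one_right (by linarith [(div_lt_one hb0).2 hab]) (inv_le_one_of_one_le₀ ha)
  linarith

section RightInverseOfHfun

variable {g : ℝ → ℝ} (hg : MapsTo g (Ioi 0) (Ioi 1)) (hfg : RightInvOn g hfun (Ioi 0))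
include hg hfg

theorem invOn_hfun : InvOn g hfun (Ioi 1) (Ioi 0) :=
  ⟨(strictMonoOn_hfun.mono Ioi_subset_Ici_self).injOn.rightInvOn_of_leftInvOn hfg mapsTo_hfun hg,
    hfg⟩

theorem strictMonoOn_mul_comp_div {c : ℝ} (hc : 0 < c) :
    StrictMonoOn (fun x => x * g (c / x)) (Ioi 0) := by
  have hg_mono := (strictMonoOn_hfun.mono Ioi_subset_Ici_self).strictMonoOn_of_rightInvOn hg hfg
  have key : ∀ x ∈ Ioi (0 : ℝ), x * g (c / x) = c / (hfun (g (c / x)) / g (c / x)) := by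
    intro x hx
    have hy : c / x ∈ Ioi 0 := div_pos hc hx
    have : g (c / x) ≠ 0 := (zero_lt_one.trans (hg hy)).ne'
    rw [hfg.eq hy]
    field_simp
  intro x₁ hx₁ x₂ hx₂ hx
  have hy₁ : c / x₁ ∈ Ioi 0 := div_pos hc hx₁
  have hy₂ : c / x₂ ∈ Ioi 0 := div_pos hc hx₂
  have hlt : g (c / x₂) < g (c / x₁) := hg_mono hy₂ hy₁ (div_lt_div_of_pos_left hc hx₁ hx)
  simp only [key x₁ hx₁, key x₂ hx₂]
  exact div_lt_div_of_pos_left hc (div_pos (mapsTo_hfun (hg hy₂)) (zero_lt_one.trans (hg hy₂)))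
    (strictMonoOn_hfun_div_self (Ioi_subset_Ici_self (hg hy₂)) (Ioi_subset_Ici_self (hg hy₁)) hlt)

end RightInverseOfHfun

/-- Properties of the function `h` (Lemma D.1). -/
theorem hfun_properties (hinv : ℝ → ℝ)
    (hhinv : ∀ y ∈ Set.Ioi (0:ℝ), hinv y ∈ Set.Ioi (1:ℝ) ∧ hfun (hinv y) = y) :
    -- h is increasing and strictly convex from (1,∞) onto (0,∞)
    StrictMonoOn hfun (Set.Ioi 1) ∧
    StrictConvexOn ℝ (Set.Ioi 1) hfun ∧
    hfun '' Set.Ioi 1 = Set.Ioi 0 ∧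
    -- h⁻¹ is increasing and strictly concave from (0,∞) onto (1,∞)
    StrictMonoOn hinv (Set.Ioi 0) ∧
    StrictConcaveOn ℝ (Set.Ioi 0) hinv ∧
    hinv '' Set.Ioi 0 = Set.Ioi 1 ∧
    -- (a) bounds on h
    (∀ l : ℝ, 1 < l → 2 * (Real.sqrt l - 1) ^ 2 ≤ hfun l ∧ hfun l ≤ (l - 1) ^ 2 / 2) ∧
    -- (b) bounds on h⁻¹
    (∀ y : ℝ, 0 < y → 1 + Real.sqrt (2 * y) ≤ hinv y ∧ hinv y ≤ (1 + Real.sqrt (y / 2)) ^ 2) ∧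
    -- (c) x ↦ x h⁻¹(c/x) is increasing on (1,∞)
    (∀ c : ℝ, 0 < c → StrictMonoOn (fun x => x * hinv (c / x)) (Set.Ioi 1)) := by
  have hg : MapsTo hinv (Ioi 0) (Ioi 1) := fun y hy => (hhinv y hy).1
  have hfg : RightInvOn hinv hfun (Ioi 0) := fun y hy => (hhinv y hy).2
  have hinvOn := invOn_hfun hg hfg
  have hmono : StrictMonoOn hfun (Ioi 1) := strictMonoOn_hfun.mono Ioi_subset_Ici_self
  have hconv : StrictConvexOn ℝ (Ioi 1) hfun :=
    strictConvexOn_hfun.subset (Ioi_subset_Ici zero_le_one) (convex_Ioi 1)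
  refine ⟨hmono, hconv, (hinvOn.bijOn mapsTo_hfun hg).image_eq,
    hmono.strictMonoOn_of_rightInvOn hg hfg,
    hconv.strictConcaveOn_of_rightInvOn hmono (convex_Ioi 0) hg hfg,
    (hinvOn.symm.bijOn hg mapsTo_hfun).image_eq,
    fun l hl => ⟨two_mul_sqrt_sub_one_sq_le_hfun hl.le, hfun_le_sub_one_sq_div_two hl.le⟩,
    fun y hy => ?_,
    fun c hc => (strictMonoOn_mul_comp_div hg hfg hc).mono (Ioi_subset_Ioi zero_le_one)⟩
  have hl : 1 ≤ hinv y := le_of_lt (hg hy)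
  simpa only [hfg.eq hy] using
    And.intro (one_add_sqrt_two_mul_hfun_le hl) (le_one_add_sqrt_hfun_div_two_sq hl)
end
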